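/- arXiv:2507.20047 — 4 statements merged into one kernel-verified Lean document; each statement's English description precedes it below -/
import Mathlib

section
/- For any two nonempty disjoint finite clusters A, B ⊆ ℝ^k, (1/2)·min(|A|,|B|)·‖μ(A) - μ(B)‖² ≤ d_Ward(A, B) ≤ min(|A|,|B|)·‖μ(A) - μ(B)‖². -/
/-! Splitting the cost of `A ∪ B` about its centroid `c` by the parallel-axis theorem gives
`d_Ward(A, B) = |A| ‖μ(A) - c‖² + |B| ‖μ(B) - c‖²`; since `c` is the `|A| : |B|` weighted mean of
`μ(A)` and `μ(B)`, this is `|A| |B| / (|A| + |B|) · ‖μ(A) - μ(B)‖²`. Half the harmonic mean of two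
nonnegative numbers lies between half their minimum and their minimum. -/

open scoped Classical

noncomputable def centroid {k : ℕ} (A : Finset (EuclideanSpace ℝ (Fin k))) :
    EuclideanSpace ℝ (Fin k) :=
  (A.card : ℝ)⁻¹ • ∑ a ∈ A, a

noncomputable def kMeansCost {k : ℕ} (X : Finset (EuclideanSpace ℝ (Fin k))) : ℝ :=
  ∑ x ∈ X, ‖x - centroid X‖ ^ 2

noncomputable def dWard {k : ℕ} (A B : Finset (EuclideanSpace ℝ (Fin k))) : ℝ :=
  kMeansCost (A ∪ B) - kMeansCost A - kMeansCost B

section HarmonicMean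

variable {𝕜 : Type*} [Field 𝕜] [LinearOrder 𝕜] [IsStrictOrderedRing 𝕜] {a b : 𝕜}

lemma mul_div_add_le_min (ha : 0 ≤ a) (hb : 0 ≤ b) : a * b / (a + b) ≤ min a b := by
  rcases (add_nonneg ha hb).eq_or_lt with hab | hab
  · rw [← hab, div_zero]
    exact le_min ha hb
  · rw [div_le_iff₀ hab]
    rcases le_total a b with h | h
    · rw [min_eq_left h]; nlinarith
    · rw [min_eq_right h]; nlinarith

lemma half_min_le_mul_div_add (ha : 0 ≤ a) (hb : 0 ≤ b) : 1 / 2 * min a b ≤ a * b / (a + b) := by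
  rcases (add_nonneg ha hb).eq_or_lt with hab | hab
  · obtain ⟨rfl, rfl⟩ : a = 0 ∧ b = 0 := ⟨by linarith, by linarith⟩
    simp
  · rw [le_div_iff₀ hab]
    rcases le_total a b with h | h
    · rw [min_eq_left h]; nlinarith
    · rw [min_eq_right h]; nlinarith

end HarmonicMean

lemma weighted_sq_norm_sub_weighted_mean {E : Type*} [NormedAddCommGroup E] [InnerProductSpace ℝ E]
    {a b : ℝ} (hab : a + b ≠ 0) (u v : E) :
    a * ‖u - (a + b)⁻¹ • (a • u + b • v)‖ ^ 2 + b * ‖v - (a + b)⁻¹ • (a • u + b • v)‖ ^ 2 =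
      a * b / (a + b) * ‖u - v‖ ^ 2 := by
  have hu : u - (a + b)⁻¹ • (a • u + b • v) = (b / (a + b)) • (u - v) := by
    match_scalars
    · field_simp
      ring
    · field_simp
  have hv : v - (a + b)⁻¹ • (a • u + b • v) = (a / (a + b)) • (v - u) := by
    match_scalars
    · field_simp
      ring
    · field_simp
  rw [hu, hv, norm_smul, norm_smul, norm_sub_rev v u, mul_pow, mul_pow, Real.norm_eq_abs,
    Real.norm_eq_abs, sq_abs, sq_abs]
  field_simp
  ring

section Centroid

variable {k : ℕ}

lemma sum_eq_card_smul_centroid (X : Finset (EuclideanSpace ℝ (Fin k))) :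
    ∑ x ∈ X, x = (X.card : ℝ) • centroid X := by
  rcases X.eq_empty_or_nonempty with rfl | hX
  · simp
  · rw [centroid, smul_inv_smul₀ (by exact_mod_cast hX.card_pos.ne')]

lemma sum_norm_sub_sq_eq_kMeansCost_add (X : Finset (EuclideanSpace ℝ (Fin k)))
    (c : EuclideanSpace ℝ (Fin k)) :
    ∑ x ∈ X, ‖x - c‖ ^ 2 = kMeansCost X + X.card * ‖centroid X - c‖ ^ 2 := by
  have hsum : ∑ x ∈ X, (x - centroid X) = 0 := by
    rw [Finset.sum_sub_distrib, Finset.sum_const, sum_eq_card_smul_centroid X,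
      Nat.cast_smul_eq_nsmul ℝ, sub_self]
  have hsplit : ∀ x ∈ X, ‖x - c‖ ^ 2 =
      ‖x - centroid X‖ ^ 2 + 2 * inner ℝ (x - centroid X) (centroid X - c) +
        ‖centroid X - c‖ ^ 2 := fun x _ => by
    rw [← norm_add_sq_real, sub_add_sub_cancel]
  rw [Finset.sum_congr rfl hsplit, Finset.sum_add_distrib, Finset.sum_add_distrib,
    Finset.sum_const, ← Finset.mul_sum, ← sum_inner, hsum, inner_zero_left, mul_zero, add_zero,
    nsmul_eq_mul, kMeansCost]

lemma centroid_union {A B : Finset (EuclideanSpace ℝ (Fin k))} (hAB : Disjoint A B) :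
    centroid (A ∪ B) = ((A.card : ℝ) + B.card)⁻¹ •
      ((A.card : ℝ) • centroid A + (B.card : ℝ) • centroid B) := by
  rw [centroid, Finset.sum_union hAB, sum_eq_card_smul_centroid A, sum_eq_card_smul_centroid B,
    Finset.card_union_of_disjoint hAB, Nat.cast_add]

lemma dWard_eq {A B : Finset (EuclideanSpace ℝ (Fin k))} (hAB : Disjoint A B) :
    dWard A B = A.card * B.card / (A.card + B.card) * ‖centroid A - centroid B‖ ^ 2 := by
  rcases (A ∪ B).eq_empty_or_nonempty with hU | hU
  · obtain ⟨rfl, rfl⟩ := Finset.union_eq_empty.mp hU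
    simp [dWard, kMeansCost]
  have hcard : (A.card : ℝ) + B.card ≠ 0 := by
    rw [← Nat.cast_add, ← Finset.card_union_of_disjoint hAB]
    exact_mod_cast hU.card_pos.ne'
  rw [← weighted_sq_norm_sub_weighted_mean hcard, ← centroid_union hAB, dWard,
    kMeansCost, Finset.sum_union hAB, sum_norm_sub_sq_eq_kMeansCost_add A,
    sum_norm_sub_sq_eq_kMeansCost_add B]
  ring

end Centroid

theorem ward_approx_general {k : ℕ} (A B : Finset (EuclideanSpace ℝ (Fin k)))
    (hAB : Disjoint A B) :
    (1 / 2) * (min (A.card : ℝ) (B.card : ℝ)) * ‖centroid A - centroid B‖ ^ 2 ≤ dWard A B ∧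
    dWard A B ≤ (min (A.card : ℝ) (B.card : ℝ)) * ‖centroid A - centroid B‖ ^ 2 := by
  have ha : (0 : ℝ) ≤ A.card := Nat.cast_nonneg _
  have hb : (0 : ℝ) ≤ B.card := Nat.cast_nonneg _
  rw [dWard_eq hAB]
  exact ⟨by gcongr; exact half_min_le_mul_div_add ha hb,
    by gcongr; exact mul_div_add_le_min ha hb⟩

theorem ward_approx {k : ℕ} (A B : Finset (EuclideanSpace ℝ (Fin k)))
    (hA : A.Nonempty) (hB : B.Nonempty) (hAB : Disjoint A B) :
    (1 / 2) * (min (A.card : ℝ) (B.card : ℝ)) * ‖centroid A - centroid B‖ ^ 2 ≤ dWard A B ∧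
    dWard A B ≤ (min (A.card : ℝ) (B.card : ℝ)) * ‖centroid A - centroid B‖ ^ 2 :=
  ward_approx_general A B hAB
end

section
/- For any three pairwise disjoint nonempty finite clusters A, B, C ⊆ ℝ^k, Ward's linkage satisfies the Lance–Williams update formula: d_Ward(A ∪ B, C) = ((|A|+|C|)/(|A|+|B|+|C|))·d_Ward(A, C) + ((|B|+|C|)/(|A|+|B|+|C|))·d_Ward(B, C) - (|C|/(|A|+|B|+|C|))·d_Ward(A, B). -/
open scoped Classical

/-!
Writing `s_X = ∑ x ∈ X, x`, the cost of a cluster is `Δ(X) = ∑ ‖x‖² - ‖s_X‖² / |X|`, so for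
disjoint clusters `d_Ward(X, Y) = ‖s_X‖²/|X| + ‖s_Y‖²/|Y| - ‖s_X + s_Y‖²/(|X| + |Y|)`: the
squared norms of the points cancel. The Lance–Williams formula thereby becomes an identity
between three vectors `s_A, s_B, s_C` and three positive weights, which is checked by expanding
the squared norms of sums into inner products.
-/

open scoped RealInnerProductSpace

section WardOfSums

variable {E : Type*} [NormedAddCommGroup E] [InnerProductSpace ℝ E]

/-- Ward's linkage of two disjoint clusters with coordinate sums `x`, `y` and sizes `a`, `b`. -/
noncomputable def wardOfSums (x : E) (a : ℝ) (y : E) (b : ℝ) : ℝ :=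
  ‖x‖ ^ 2 / a + ‖y‖ ^ 2 / b - ‖x + y‖ ^ 2 / (a + b)

theorem wardOfSums_lance_williams (x y z : E) {a b c : ℝ} (ha : 0 < a) (hb : 0 < b)
    (hc : 0 < c) :
    wardOfSums (x + y) (a + b) z c =
      (a + c) / (a + b + c) * wardOfSums x a z c + (b + c) / (a + b + c) * wardOfSums y b z c -
        c / (a + b + c) * wardOfSums x a y b := by
  have norm_add_add_sq : ‖x + y + z‖ ^ 2 =
      ‖x‖ ^ 2 + ‖y‖ ^ 2 + ‖z‖ ^ 2 + 2 * ⟪x, y⟫ + 2 * ⟪x, z⟫ + 2 * ⟪y, z⟫ := by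
    rw [norm_add_sq_real, norm_add_sq_real x y, inner_add_left]
    ring
  simp only [wardOfSums]
  rw [norm_add_add_sq, norm_add_sq_real x y, norm_add_sq_real x z, norm_add_sq_real y z]
  field_simp
  ring

end WardOfSums

section Clusters

variable {k : ℕ}

theorem kMeansCost_eq_sum_norm_sq_sub (X : Finset (EuclideanSpace ℝ (Fin k))) :
    kMeansCost X = ∑ x ∈ X, ‖x‖ ^ 2 - ‖∑ x ∈ X, x‖ ^ 2 / X.card := by
  rcases X.eq_empty_or_nonempty with rfl | hX
  · simp [kMeansCost]
  have hn : (X.card : ℝ) ≠ 0 := by exact_mod_cast hX.card_pos.ne'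
  set S := ∑ x ∈ X, x
  have inner_sum_centroid : ⟪S, centroid X⟫ = (X.card : ℝ)⁻¹ * ‖S‖ ^ 2 := by
    rw [centroid, real_inner_smul_right, real_inner_self_eq_norm_sq]
  have norm_centroid_sq : ‖centroid X‖ ^ 2 = (X.card : ℝ)⁻¹ ^ 2 * ‖S‖ ^ 2 := by
    rw [centroid, norm_smul, mul_pow, Real.norm_eq_abs, sq_abs]
  simp only [kMeansCost, norm_sub_sq_real]
  rw [Finset.sum_add_distrib, Finset.sum_sub_distrib, Finset.sum_const, nsmul_eq_mul,
    ← Finset.mul_sum, ← sum_inner, inner_sum_centroid, norm_centroid_sq]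
  field_simp
  ring

theorem dWard_eq_wardOfSums {A B : Finset (EuclideanSpace ℝ (Fin k))} (hAB : Disjoint A B) :
    dWard A B = wardOfSums (∑ a ∈ A, a) A.card (∑ b ∈ B, b) B.card := by
  rw [dWard, wardOfSums, kMeansCost_eq_sum_norm_sq_sub, kMeansCost_eq_sum_norm_sq_sub,
    kMeansCost_eq_sum_norm_sq_sub, Finset.sum_union hAB, Finset.sum_union hAB,
    Finset.card_union_of_disjoint hAB, Nat.cast_add]
  ring

end Clusters

theorem ward_lance_williams {k : ℕ} (A B C : Finset (EuclideanSpace ℝ (Fin k)))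
    (hA : A.Nonempty) (hB : B.Nonempty) (hC : C.Nonempty)
    (hAB : Disjoint A B) (hAC : Disjoint A C) (hBC : Disjoint B C) :
    dWard (A ∪ B) C =
      (((A.card : ℝ) + C.card) / (A.card + B.card + C.card)) * dWard A C +
      (((B.card : ℝ) + C.card) / (A.card + B.card + C.card)) * dWard B C -
      ((C.card : ℝ) / (A.card + B.card + C.card)) * dWard A B := by
  have card_pos {X : Finset (EuclideanSpace ℝ (Fin k))} (hX : X.Nonempty) :
      (0 : ℝ) < X.card := by
    exact_mod_cast hX.card_pos
  rw [dWard_eq_wardOfSums (Finset.disjoint_union_left.2 ⟨hAC, hBC⟩), dWard_eq_wardOfSums hAC,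
    dWard_eq_wardOfSums hBC, dWard_eq_wardOfSums hAB, Finset.sum_union hAB,
    Finset.card_union_of_disjoint hAB, Nat.cast_add]
  exact wardOfSums_lance_williams _ _ _ (card_pos hA) (card_pos hB) (card_pos hC)
end

section
/- Centroid linkage is average-reducible: for any nonempty pairwise disjoint finite clusters A, B, C ⊆ ℝ^k, d_cen(A ∪ B, C) ≥ (d_cen(A, C) + d_cen(B, C))/2 - d_cen(A, B). -/
open scoped Classical

noncomputable def dCen {k : ℕ} (A B : Finset (EuclideanSpace ℝ (Fin k))) : ℝ :=
  ‖centroid A - centroid B‖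

/-! The centroid of `A ∪ B` is the `|A| : |B|` weighted average of the centroids of `A` and `B`,
so it lies on the segment between them. For any point `z` on a segment `[x, y]` and any `w`, the
triangle inequality through `z` gives `d(x, w) + d(y, w) ≤ 2 d(z, w) + d(x, z) + d(z, y)`, and
`d(x, z) + d(z, y) = d(x, y)`. -/

theorem dist_add_dist_le_of_mem_segment {E : Type*} [SeminormedAddCommGroup E] [NormedSpace ℝ E]
    {x y z : E} (h : z ∈ segment ℝ x y) (w : E) :
    dist x w + dist y w ≤ 2 * dist z w + dist x y := by
  have hx := dist_triangle x z w
  have hy := dist_triangle y z w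
  have hxy := dist_add_dist_of_mem_segment h
  rw [dist_comm y z] at hy
  linarith

theorem card_smul_centroid {k : ℕ} (A : Finset (EuclideanSpace ℝ (Fin k))) :
    (A.card : ℝ) • centroid A = ∑ a ∈ A, a := by
  rcases A.eq_empty_or_nonempty with rfl | hA
  · simp
  · exact smul_inv_smul₀ (by exact_mod_cast hA.card_pos.ne') _

theorem centroid_union_mem_segment {k : ℕ} {A B : Finset (EuclideanSpace ℝ (Fin k))}
    (hA : A.Nonempty) (hAB : Disjoint A B) :
    centroid (A ∪ B) ∈ segment ℝ (centroid A) (centroid B) := by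
  have hpos : (0 : ℝ) < A.card + B.card := by
    have := hA.card_pos
    positivity
  refine mem_segment_iff_div.2 ⟨A.card, B.card, by positivity, by positivity, hpos, ?_⟩
  rw [div_eq_inv_mul, div_eq_inv_mul, mul_smul, mul_smul, ← smul_add, card_smul_centroid,
    card_smul_centroid, ← Finset.sum_union hAB, centroid, Finset.card_union_of_disjoint hAB,
    Nat.cast_add]

theorem centroid_average_reducible_general {k : ℕ} (A B C : Finset (EuclideanSpace ℝ (Fin k)))
    (hA : A.Nonempty)
    (hAB : Disjoint A B) :
    dCen (A ∪ B) C ≥ (dCen A C + dCen B C) / 2 - dCen A B := by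
  simp only [dCen, ← dist_eq_norm]
  have := dist_add_dist_le_of_mem_segment (centroid_union_mem_segment hA hAB) (centroid C)
  linarith [dist_nonneg (x := centroid A) (y := centroid B)]

theorem centroid_average_reducible {k : ℕ} (A B C : Finset (EuclideanSpace ℝ (Fin k)))
    (hA : A.Nonempty) (hB : B.Nonempty) (hC : C.Nonempty)
    (hAB : Disjoint A B) (hAC : Disjoint A C) (hBC : Disjoint B C) :
    dCen (A ∪ B) C ≥ (dCen A C + dCen B C) / 2 - dCen A B :=
  centroid_average_reducible_general A B C hA hAB
end

section
/- Convexity-based value decrease under merges: let d be a linkage function on finite subsets of ℝ^k, let δ > 0, and let X, A, B be clusters with d(A, B) ≤ 2δ. Define val(C) := 2^(−d(X, C)/(4δ)). If d is average-reducible in the sense that d(A ∪ B, X) ≥ (d(A, X) + d(B, X))/2 − d(A, B) whenever |X| ≥ |A| + |B|, and |A| + |B| ≤ |X|, then val(A ∪ B) ≤ (1/√2)·(val(A) + val(B)). -/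
/-!
Average-reducibility with `d(A, B) ≤ 2δ` bounds `d(X, A ∪ B)` below by the mean of `d(X, A)` and
`d(X, B)` minus `2δ`. In the exponent of `val` the loss `2δ` costs a factor `2 ^ (2δ / 4δ) = √2`,
and the mean becomes the geometric mean `√(val A * val B)`, which AM-GM bounds by
`(val A + val B) / 2`.
-/

open Real

lemma le_dist_union_of_avgReducible {α : Type*} [DecidableEq α]
    (d : Finset α → Finset α → ℝ) (hsymm : ∀ A B, d A B = d B A)
    (havg : ∀ A B C : Finset α,
      A.card + B.card ≤ C.card → d (A ∪ B) C ≥ (d A C + d B C) / 2 - d A B)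
    {X A B : Finset α} (hsize : A.card + B.card ≤ X.card) :
    (d X A + d X B) / 2 - d A B ≤ d X (A ∪ B) := by
  simpa only [hsymm X] using havg A B X hsize

lemma two_rpow_neg_div_le_of_le_mean_sub {δ x y z : ℝ} (hδ : 0 < δ)
    (hz : (x + y) / 2 - 2 * δ ≤ z) :
    (2 : ℝ) ^ (-z / (4 * δ)) ≤
      (1 / √2) * ((2 : ℝ) ^ (-x / (4 * δ)) + (2 : ℝ) ^ (-y / (4 * δ))) := by
  set a := (2 : ℝ) ^ (-x / (4 * δ))
  set b := (2 : ℝ) ^ (-y / (4 * δ))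
  have hexp : -z / (4 * δ) ≤ 1 / 2 + (-x / (4 * δ) * (1 / 2) + -y / (4 * δ) * (1 / 2)) := by
    rw [div_le_iff₀ (by positivity)]
    field_simp
    linarith
  have hamgm : a ^ (1 / 2 : ℝ) * b ^ (1 / 2 : ℝ) ≤ 1 / 2 * a + 1 / 2 * b :=
    geom_mean_le_arith_mean2_weighted (by norm_num) (by norm_num) (by positivity)
      (by positivity) (by norm_num)
  calc (2 : ℝ) ^ (-z / (4 * δ))
      ≤ (2 : ℝ) ^ (1 / 2 + (-x / (4 * δ) * (1 / 2) + -y / (4 * δ) * (1 / 2))) :=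
        rpow_le_rpow_of_exponent_le one_le_two hexp
    _ = √2 * (a ^ (1 / 2 : ℝ) * b ^ (1 / 2 : ℝ)) := by
        rw [rpow_add two_pos, rpow_add two_pos, rpow_mul zero_le_two, rpow_mul zero_le_two,
          ← sqrt_eq_rpow]
    _ ≤ √2 * (1 / 2 * a + 1 / 2 * b) := by gcongr
    _ = (1 / √2) * (a + b) := by
        field_simp
        rw [sq_sqrt zero_le_two]

theorem val_decrease_under_merge_general {k : ℕ}
    (d : Finset (EuclideanSpace ℝ (Fin k)) → Finset (EuclideanSpace ℝ (Fin k)) → ℝ)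
    (hsymm : ∀ A B, d A B = d B A)
    (havg : ∀ A B C : Finset (EuclideanSpace ℝ (Fin k)),
      A.card + B.card ≤ C.card → d (A ∪ B) C ≥ (d A C + d B C) / 2 - d A B)
    (δ : ℝ) (hδ : 0 < δ)
    (X A B : Finset (EuclideanSpace ℝ (Fin k)))
    (hAB : d A B ≤ 2 * δ) (hsize : A.card + B.card ≤ X.card) :
    (2 : ℝ) ^ (-(d X (A ∪ B)) / (4 * δ)) ≤
      (1 / Real.sqrt 2) *
        ((2 : ℝ) ^ (-(d X A) / (4 * δ)) + (2 : ℝ) ^ (-(d X B) / (4 * δ))) := by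
  have hunion := le_dist_union_of_avgReducible d hsymm havg hsize
  exact two_rpow_neg_div_le_of_le_mean_sub hδ (by linarith)

theorem val_decrease_under_merge {k : ℕ}
    (d : Finset (EuclideanSpace ℝ (Fin k)) → Finset (EuclideanSpace ℝ (Fin k)) → ℝ)
    (hsymm : ∀ A B, d A B = d B A)
    (hnonneg : ∀ A B, 0 ≤ d A B)
    (havg : ∀ A B C : Finset (EuclideanSpace ℝ (Fin k)),
      A.card + B.card ≤ C.card → d (A ∪ B) C ≥ (d A C + d B C) / 2 - d A B)
    (δ : ℝ) (hδ : 0 < δ)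
    (X A B : Finset (EuclideanSpace ℝ (Fin k)))
    (hAB : d A B ≤ 2 * δ) (hsize : A.card + B.card ≤ X.card) :
    (2 : ℝ) ^ (-(d X (A ∪ B)) / (4 * δ)) ≤
      (1 / Real.sqrt 2) *
        ((2 : ℝ) ^ (-(d X A) / (4 * δ)) + (2 : ℝ) ^ (-(d X B) / (4 * δ))) :=
  val_decrease_under_merge_general d hsymm havg δ hδ X A B hAB hsize
end
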